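/- arXiv:gr-qc/9807082 — 2 statements merged into one kernel-verified Lean document; each statement's English description precedes it below -/
import Mathlib

section
/- The bilinear form ⟨v,w⟩ := q^{ab} D_a v D_b w + v w on the 4-dimensional space T of asymptotic translations on the unit hyperboloid is a nondegenerate symmetric bilinear form of Lorentzian signature; moreover, under the identification of T with R^4 via v_k(x) = ⟨k,x⟩, one has ⟨v_k, v_l⟩ = ⟨k,l⟩, the ambient Minkowski inner product. -/
/-
Common extrinsic setup (used in all files).

We work in ℝ⁴ with the Minkowski inner product of signature (+,+,+,-) (CONTEXT 0).
`Hb` is the unit hyperboloid H = {x | ⟨x,x⟩ = 1}, `Ur` the open exterior region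
{⟨x,x⟩ > 0} on which fields on H are represented (only their restriction to H matters,
since every intrinsic operator below first composes with the radial retraction `ret`,
i.e. with the 0-homogeneous extension).

Standard facts about hypersurfaces give the following *definitions* of the intrinsic
(Levi-Civita) operators of the induced metric q on H in terms of ambient derivatives of
the 0-homogeneous extension:
 * the induced metric q at x ∈ H is the restriction of ⟨·,·⟩ to the tangent space
   {u | ⟨x,u⟩ = 0};
 * the intrinsic Hessian D_aD_b f on tangent vectors is the ambient Hessian of the
   0-homogeneous extension (the second-fundamental-form correction vanishes because the
   0-homogeneous extension has radial derivative 0);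
 * the intrinsic gradient D^a f is the ambient Minkowski gradient of the 0-homogeneous
   extension (automatically tangent);
 * the intrinsic Laplacian D² f = q^{ab} D_aD_b f is the ambient wave operator applied
   to the 0-homogeneous extension;
 * the intrinsic divergence D_a V^a of a tangent field is the ambient divergence of its
   0-homogeneous extension.
-/

noncomputable section

open scoped BigOperators

/-- ℝ⁴. -/
abbrev E4 : Type := Fin 4 → ℝ

/-- The signature (+,+,+,-). -/
def sg (i : Fin 4) : ℝ := if i = 3 then -1 else 1

/-- The Minkowski inner product ⟨x,y⟩ = x₀y₀ + x₁y₁ + x₂y₂ − x₃y₃. -/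
def mk4 (x y : E4) : ℝ := ∑ i, sg i * x i * y i

/-- The unit hyperboloid H = {x | ⟨x,x⟩ = 1}. -/
def Hb : Set E4 := {x | mk4 x x = 1}

/-- The exterior region {x | ⟨x,x⟩ > 0}. -/
def Ur : Set E4 := {x | 0 < mk4 x x}

/-- Radial retraction of the exterior region onto H. -/
def ret (x : E4) : E4 := (Real.sqrt (mk4 x x))⁻¹ • x

/-- 0-homogeneous extension of (the H-restriction of) a scalar field. -/
def Hz (f : E4 → ℝ) : E4 → ℝ := fun x => f (ret x)

/-- Standard basis of ℝ⁴. -/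
def bas (i : Fin 4) : E4 := fun j => if j = i then 1 else 0

/-- Partial derivative ∂_i. -/
def pd (f : E4 → ℝ) (i : Fin 4) (x : E4) : ℝ := fderiv ℝ f x (bas i)

/-- Ambient Minkowski gradient (index raised with the Minkowski metric). -/
def mgrad (f : E4 → ℝ) (x : E4) : E4 := fun i => sg i * pd f i x

/-- Intrinsic gradient D^a f on H. -/
def grH (f : E4 → ℝ) (x : E4) : E4 := mgrad (Hz f) x

/-- Ambient Minkowski wave operator □ = ∂² + ∂² + ∂² − ∂². -/
def boxm (f : E4 → ℝ) (x : E4) : ℝ := ∑ i, sg i * pd (pd f i) i x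

/-- Intrinsic Laplacian D² f = q^{ab} D_a D_b f on H. -/
def D2H (f : E4 → ℝ) (x : E4) : ℝ := boxm (Hz f) x

/-- 0-homogeneous extension of a vector field on H. -/
def HzV (V : E4 → E4) : E4 → E4 := fun x => V (ret x)

/-- Intrinsic divergence D_a V^a on H of a tangent vector field. -/
def divH (V : E4 → E4) (x : E4) : ℝ := ∑ i, fderiv ℝ (HzV V) x (bas i) i

/-- `u` is tangent to H at `x`. -/
def Tang (x u : E4) : Prop := mk4 x u = 0

/-- Intrinsic Hessian D_a D_b f on H, evaluated on (tangent) vectors u, v. -/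
def HessH (f : E4 → ℝ) (x u v : E4) : ℝ :=
  fderiv ℝ (fun y => fderiv ℝ (Hz f) y v) x u

/-- The linear field α_k = ⟨k,·⟩; its restriction to H is an asymptotic translation. -/
def trfn (k : E4) : E4 → ℝ := fun x => mk4 k x

/-- `f` (restricted to H) is an asymptotic translation: D_a D_b f + f q_ab = 0. -/
def IsATrans (f : E4 → ℝ) : Prop :=
  ContDiffOn ℝ (⊤ : ℕ∞) f Ur ∧
  ∀ x ∈ Hb, ∀ u v : E4, Tang x u → Tang x v →
    HessH f x u v + f x * mk4 u v = 0

def prj (i : Fin 4) : E4 →L[ℝ] ℝ := ContinuousLinearMap.proj i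
def QL (x : E4) : E4 →L[ℝ] ℝ := ∑ i, (2 * sg i * x i) • prj i
def ML (k : E4) : E4 →L[ℝ] ℝ := ∑ i, (sg i * k i) • prj i

lemma hasQ (x : E4) : HasFDerivAt (fun y : E4 => mk4 y y) (QL x) x := by
  have : ∀ i : Fin 4, HasFDerivAt (fun y : E4 => sg i * y i * y i)
      ((2 * sg i * x i) • prj i) x := by
    intro i
    have h := ((prj i).hasFDerivAt (x := x)).mul ((prj i).hasFDerivAt (x := x))
    have h2 := h.const_mul (sg i)
    have h3 : (2 * sg i * x i) • prj i = sg i • ((prj i) x • prj i + (prj i) x • prj i) := by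
      ext u; simp [prj]; ring
    rw [h3]
    exact h2.congr_of_eventuallyEq (Filter.Eventually.of_forall fun y => by simp [prj]; ring)
  have := HasFDerivAt.fun_sum (fun i (_ : i ∈ Finset.univ) => this i)
  exact this.congr_of_eventuallyEq (Filter.Eventually.of_forall fun y => by simp [mk4])

lemma hasM (k x : E4) : HasFDerivAt (fun y : E4 => mk4 k y) (ML k) x := by
  have : ∀ i : Fin 4, HasFDerivAt (fun y : E4 => sg i * k i * y i)
      ((sg i * k i) • prj i) x := fun i => ((prj i).hasFDerivAt (x := x)).const_mul _
  have := HasFDerivAt.fun_sum (fun i (_ : i ∈ Finset.univ) => this i)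
  exact this.congr_of_eventuallyEq (Filter.Eventually.of_forall fun y => by simp [mk4])

lemma QL_bas (x : E4) (i : Fin 4) : QL x (bas i) = 2 * sg i * x i := by
  simp [QL, prj, bas, Finset.sum_ite_eq']
lemma ML_bas (k : E4) (i : Fin 4) : ML k (bas i) = sg i * k i := by
  simp [ML, prj, bas, Finset.sum_ite_eq']

lemma mk4_smul_right (k : E4) (c : ℝ) (x : E4) : mk4 k (c • x) = c * mk4 k x := by
  simp [mk4, Finset.mul_sum]; exact Finset.sum_congr rfl fun i _ => by ring

lemma Hz_trfn (k : E4) : Hz (trfn k) = fun y => (Real.sqrt (mk4 y y))⁻¹ * mk4 k y := by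
  funext y; simp [Hz, trfn, ret, mk4_smul_right]

lemma grH_trfn (k x : E4) (hx : mk4 x x = 1) :
    grH (trfn k) x = fun i => k i - mk4 k x * x i := by
  have hs1 : Real.sqrt (mk4 x x) = 1 := by rw [hx, Real.sqrt_one]
  have hsq : HasFDerivAt (fun y : E4 => Real.sqrt (mk4 y y))
      ((1 / (2 * Real.sqrt (mk4 x x))) • QL x) x :=
    (Real.hasDerivAt_sqrt (by rw [hx]; norm_num)).comp_hasFDerivAt x (hasQ x)
  have hinv := (hasDerivAt_inv (by rw [hs1]; norm_num)).comp_hasFDerivAt x hsq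
  have hinv' : HasFDerivAt (fun y : E4 => (Real.sqrt (mk4 y y))⁻¹)
      (-(Real.sqrt (mk4 x x) ^ 2)⁻¹ • (1 / (2 * Real.sqrt (mk4 x x))) • QL x) x := hinv
  have hmul : HasFDerivAt (fun y => (Real.sqrt (mk4 y y))⁻¹ * mk4 k y) _ x := hinv'.mul (hasM k x)
  funext i
  simp only [grH, mgrad, pd, Hz_trfn]
  rw [hmul.fderiv]
  simp only [ContinuousLinearMap.add_apply, ContinuousLinearMap.smul_apply, QL_bas, ML_bas,
    hs1, hx, smul_eq_mul]
  rcases eq_or_ne i 3 with h | h <;> simp [sg, h] <;> ring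

lemma key (k l x : E4) (hx : mk4 x x = 1) :
    mk4 (fun i => k i - mk4 k x * x i) (fun i => l i - mk4 l x * x i)
      + mk4 k x * mk4 l x = mk4 k l := by
  simp [mk4, sg, Fin.sum_univ_four] at hx ⊢
  linear_combination (k 0 * x 0 + k 1 * x 1 + k 2 * x 2 - k 3 * x 3) *
    (l 0 * x 0 + l 1 * x 1 + l 2 * x 2 - l 3 * x 3) * hx

lemma mk4_bas (k : E4) (i : Fin 4) : mk4 k (bas i) = sg i * k i := by
  simp [mk4, bas, Finset.sum_ite_eq']


/-
STATEMENT 2: The bilinear form ⟨v,w⟩ = q^{ab}D_avD_bw + vw on the space T of asymptotic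
translations, under the identification k ↦ v_k = ⟨k,·⟩|_H (T ≅ ℝ⁴ by STATEMENT 0),
equals the ambient Minkowski inner product: ⟨v_k, v_l⟩ = ⟨k,l⟩ (pointwise on H, hence
constant); in particular it is symmetric, nondegenerate, and of Lorentzian signature
(+,+,+,-) (exhibited by an orthonormal basis).
-/
theorem stmt2 :
    (∀ k l : E4, ∀ x ∈ Hb,
        mk4 (grH (trfn k) x) (grH (trfn l) x) + trfn k x * trfn l x = mk4 k l) ∧
    (∀ k l : E4, mk4 k l = mk4 l k) ∧
    (∀ k : E4, (∀ l : E4, mk4 k l = 0) → k = 0) ∧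
    (∃ b : Fin 4 → E4, LinearIndependent ℝ b ∧
      ∀ i j, mk4 (b i) (b j) = if i = j then sg i else 0) := by
  refine ⟨?_, ?_, ?_, ?_⟩
  · intro k l x hx
    rw [grH_trfn k x hx, grH_trfn l x hx]
    exact key k l x hx
  · intro k l
    exact Finset.sum_congr rfl fun i _ => by ring
  · intro k h
    funext i
    have h1 := h (bas i)
    rw [mk4_bas] at h1
    have hs : sg i ≠ 0 := by rcases eq_or_ne i 3 with hi | hi <;> simp [sg, hi]
    show k i = 0
    exact (mul_eq_zero.1 h1).resolve_left hs
  · refine ⟨bas, ?_, ?_⟩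
    · have : bas = fun i => (Pi.basisFun ℝ (Fin 4)) i := by
        funext i j; simp [bas, Pi.basisFun_apply, Pi.single_apply]
      rw [this]
      exact (Pi.basisFun ℝ (Fin 4)).linearIndependent
    · intro i j
      fin_cases i <;> fin_cases j <;> simp [mk4, bas, sg, Fin.sum_univ_four]
end
end

section
/- Let f : R → R be smooth and suppose k_±(x) := f(±1/x) for x > 0 extend smoothly to x = 0. Define φ̃(t,r) = (f(t+r) - f(t-r))/r on r > |t|. Then φ̃ solves the wave equation, is asymptotically regular of order 1, and its remnants on the unit hyperboloid are given in the coordinate ζ = sinh χ (where tanh χ = t/r) by φⁿ(ζ) = (1+ζ²)^{-1/2} [ k_+^{(n)}(0) ((1+ζ²)^{1/2} - ζ)ⁿ - k_-^{(n)}(0) ((1+ζ²)^{1/2} + ζ)ⁿ ]. -/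
/-
Common extrinsic setup (used in all files).

We work in ℝ⁴ with the Minkowski inner product of signature (+,+,+,-) (CONTEXT 0).
`Hb` is the unit hyperboloid H = {x | ⟨x,x⟩ = 1}, `Ur` the open exterior region
{⟨x,x⟩ > 0} on which fields on H are represented (only their restriction to H matters,
since every intrinsic operator below first composes with the radial retraction `ret`,
i.e. with the 0-homogeneous extension).

Standard facts about hypersurfaces give the following *definitions* of the intrinsic
(Levi-Civita) operators of the induced metric q on H in terms of ambient derivatives of
the 0-homogeneous extension:
 * the induced metric q at x ∈ H is the restriction of ⟨·,·⟩ to the tangent space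
   {u | ⟨x,u⟩ = 0};
 * the intrinsic Hessian D_aD_b f on tangent vectors is the ambient Hessian of the
   0-homogeneous extension (the second-fundamental-form correction vanishes because the
   0-homogeneous extension has radial derivative 0);
 * the intrinsic gradient D^a f is the ambient Minkowski gradient of the 0-homogeneous
   extension (automatically tangent);
 * the intrinsic Laplacian D² f = q^{ab} D_aD_b f is the ambient wave operator applied
   to the 0-homogeneous extension;
 * the intrinsic divergence D_a V^a of a tangent field is the ambient divergence of its
   0-homogeneous extension.
-/

noncomputable section

open scoped BigOperators

/-- The radial coordinate r. -/
def rad (x : E4) : ℝ := Real.sqrt ((x 0)^2 + (x 1)^2 + (x 2)^2)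

/-- The time coordinate t. -/
def tco (x : E4) : ℝ := x 3

/-- The field φ̃ = (f(t+r) − f(t−r))/r. -/
def phit (f : ℝ → ℝ) (x : E4) : ℝ := (f (tco x + rad x) - f (tco x - rad x)) / rad x

/-- A completion datum for φ̃ of order 1 exactly as in STATEMENT 5: a smooth extension
F(Ω,·) of Ω^{-1}φ̃ up to Ω = 0, second argument represented 0-homogeneously. -/
def CompProps (f : ℝ → ℝ) (F : ℝ → E4 → ℝ) : Prop :=
  ContDiffOn ℝ (⊤ : ℕ∞) (fun p : ℝ × E4 => F p.1 p.2) {p : ℝ × E4 | p.2 ∈ Ur} ∧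
  (∀ (s c : ℝ), 0 < c → ∀ x ∈ Ur, F s (c • x) = F s x) ∧
  (∀ s : ℝ, 0 < s → ∀ x ∈ Hb, F s x = (1 / s) * phit f ((1 / s) • x))

-- basic facts
lemma mk4_eq (x : E4) : mk4 x x = (x 0)^2 + (x 1)^2 + (x 2)^2 - (x 3)^2 := by
  simp [mk4, sg, Fin.sum_univ_four]; ring

lemma Q_pos {x : E4} (hx : x ∈ Ur) : 0 < (x 0)^2 + (x 1)^2 + (x 2)^2 := by
  have := hx; simp only [Ur, Set.mem_setOf_eq, mk4_eq] at this
  nlinarith [sq_nonneg (x 3)]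

lemma rad_pos {x : E4} (hx : x ∈ Ur) : 0 < rad x := Real.sqrt_pos.mpr (Q_pos hx)

lemma rad_sq {x : E4} (hx : x ∈ Ur) : rad x ^ 2 = (x 0)^2 + (x 1)^2 + (x 2)^2 :=
  Real.sq_sqrt (Q_pos hx).le

lemma abs_lt_rad {x : E4} (hx : x ∈ Ur) : |x 3| < rad x := by
  have h1 := rad_pos hx
  have h2 := rad_sq hx
  have := hx; simp only [Ur, Set.mem_setOf_eq, mk4_eq] at this
  nlinarith [abs_nonneg (x 3), sq_abs (x 3)]

lemma rad_add_pos {x : E4} (hx : x ∈ Ur) : 0 < x 3 + rad x := by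
  have := abs_lt_rad hx; have := abs_le.mp (le_of_lt this); linarith [(abs_lt.mp (abs_lt_rad hx)).1]

lemma rad_sub_pos {x : E4} (hx : x ∈ Ur) : 0 < rad x - x 3 := by
  linarith [(abs_lt.mp (abs_lt_rad hx)).2]

-- CLM setup
def SS (x : E4) : E4 →L[ℝ] ℝ :=
  x 0 • ContinuousLinearMap.proj 0 + x 1 • ContinuousLinearMap.proj 1 +
    x 2 • ContinuousLinearMap.proj 2

lemma SS_apply (x v : E4) : SS x v = x 0 * v 0 + x 1 * v 1 + x 2 * v 2 := by
  simp [SS]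

lemma isOpen_Ur : IsOpen Ur := by
  have : Ur = (fun x : E4 => mk4 x x) ⁻¹' Set.Ioi 0 := rfl
  rw [this]
  refine IsOpen.preimage ?_ isOpen_Ioi
  unfold mk4
  exact continuous_finset_sum _ fun i _ =>
    ((continuous_const.mul (continuous_apply i)).mul (continuous_apply i))

lemma hasFDerivAt_rad {x : E4} (hx : x ∈ Ur) :
    HasFDerivAt rad ((rad x)⁻¹ • SS x) x := by
  have h0 := (ContinuousLinearMap.proj 0 : E4 →L[ℝ] ℝ).hasFDerivAt (x := x)
  have h1 := (ContinuousLinearMap.proj 1 : E4 →L[ℝ] ℝ).hasFDerivAt (x := x)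
  have h2 := (ContinuousLinearMap.proj 2 : E4 →L[ℝ] ℝ).hasFDerivAt (x := x)
  have h := ((h0.mul h0).add (h1.mul h1)).add (h2.mul h2)
  have hQ : HasFDerivAt (fun y : E4 => (y 0)^2 + (y 1)^2 + (y 2)^2)
      ((2:ℝ) • SS x) x := by
    have e : (fun y : E4 => (y 0)^2 + (y 1)^2 + (y 2)^2)
        = (fun y : E4 => (ContinuousLinearMap.proj 0 : E4 →L[ℝ] ℝ) y *
            (ContinuousLinearMap.proj 0 : E4 →L[ℝ] ℝ) y +
            (ContinuousLinearMap.proj 1 : E4 →L[ℝ] ℝ) y *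
            (ContinuousLinearMap.proj 1 : E4 →L[ℝ] ℝ) y +
            (ContinuousLinearMap.proj 2 : E4 →L[ℝ] ℝ) y *
            (ContinuousLinearMap.proj 2 : E4 →L[ℝ] ℝ) y) := by
      funext y; simp; ring
    rw [e]
    refine h.congr_fderiv ?_
    refine ContinuousLinearMap.ext fun v => ?_
    simp [SS]
    ring
  have hr := hQ.sqrt (ne_of_gt (Q_pos hx))
  have hrr : rad = fun y : E4 => Real.sqrt ((y 0)^2 + (y 1)^2 + (y 2)^2) := rfl
  rw [hrr]
  refine hr.congr_fderiv ?_
  symm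
  rw [smul_smul]
  congr 1
  have hrp := rad_pos hx
  have hh : Real.sqrt ((x 0)^2 + (x 1)^2 + (x 2)^2) = rad x := rfl
  rw [show ((fun y : E4 => Real.sqrt ((y 0)^2+(y 1)^2+(y 2)^2)) x) = rad x from rfl]
  field_simp
  rw [hh]
  rw [div_self (by positivity)]

def LA (x : E4) : E4 →L[ℝ] ℝ := (ContinuousLinearMap.proj 3 : E4 →L[ℝ] ℝ) + (rad x)⁻¹ • SS x
def LB (x : E4) : E4 →L[ℝ] ℝ := (ContinuousLinearMap.proj 3 : E4 →L[ℝ] ℝ) - (rad x)⁻¹ • SS x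
def DIV (x : E4) : E4 →L[ℝ] ℝ := (-((rad x)^2)⁻¹) • ((rad x)⁻¹ • SS x)

lemma hasFDerivAt_A {x : E4} (hx : x ∈ Ur) :
    HasFDerivAt (fun y : E4 => y 3 + rad y) (LA x) x :=
  ((ContinuousLinearMap.proj 3 : E4 →L[ℝ] ℝ).hasFDerivAt).add (hasFDerivAt_rad hx)

lemma hasFDerivAt_B {x : E4} (hx : x ∈ Ur) :
    HasFDerivAt (fun y : E4 => y 3 - rad y) (LB x) x :=
  ((ContinuousLinearMap.proj 3 : E4 →L[ℝ] ℝ).hasFDerivAt).sub (hasFDerivAt_rad hx)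

lemma hasFDerivAt_ivr {x : E4} (hx : x ∈ Ur) :
    HasFDerivAt (fun y : E4 => (rad y)⁻¹) (DIV x) x := by
  have h := (hasDerivAt_inv (ne_of_gt (rad_pos hx))).comp_hasFDerivAt x (hasFDerivAt_rad hx)
  exact h

lemma hasFDerivAt_compA {g : ℝ → ℝ} (hg : Differentiable ℝ g) {x : E4} (hx : x ∈ Ur) :
    HasFDerivAt (fun y : E4 => g (y 3 + rad y)) (deriv g (x 3 + rad x) • LA x) x := by
  have h := ((hg (x 3 + rad x)).hasDerivAt).comp_hasFDerivAt x (hasFDerivAt_A hx)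
  exact h

lemma hasFDerivAt_compB {g : ℝ → ℝ} (hg : Differentiable ℝ g) {x : E4} (hx : x ∈ Ur) :
    HasFDerivAt (fun y : E4 => g (y 3 - rad y)) (deriv g (x 3 - rad x) • LB x) x := by
  have h := ((hg (x 3 - rad x)).hasDerivAt).comp_hasFDerivAt x (hasFDerivAt_B hx)
  exact h

/-- First fderiv of phit. -/
lemma hasFDerivAt_phit {f : ℝ → ℝ} (hd1 : Differentiable ℝ f) {x : E4} (hx : x ∈ Ur) :
    HasFDerivAt (phit f)
      ((f (x 3 + rad x) - f (x 3 - rad x)) • DIV x +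
        (rad x)⁻¹ • (deriv f (x 3 + rad x) • LA x - deriv f (x 3 - rad x) • LB x)) x := by
  have h := ((hasFDerivAt_compA hd1 hx).sub (hasFDerivAt_compB hd1 hx)).mul (hasFDerivAt_ivr hx)
  have e : phit f = fun y : E4 => (f (y 3 + rad y) - f (y 3 - rad y)) * (rad y)⁻¹ := by
    funext y; simp [phit, tco, div_eq_mul_inv]
  rw [e]
  exact h

def Pfun (f : ℝ → ℝ) (x : E4) : ℝ :=
  (deriv f (x 3 + rad x) + deriv f (x 3 - rad x)) * ((rad x)⁻¹ * (rad x)⁻¹)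
    - (f (x 3 + rad x) - f (x 3 - rad x)) * ((rad x)⁻¹ * (rad x)⁻¹ * (rad x)⁻¹)

lemma bas_self (i : Fin 4) : bas i i = 1 := by simp [bas]

lemma pd_phit_spatial {f : ℝ → ℝ} (hd1 : Differentiable ℝ f) (i : Fin 4) (hi : i ≠ 3)
    {x : E4} (hx : x ∈ Ur) : pd (phit f) i x = x i * Pfun f x := by
  have h := (hasFDerivAt_phit hd1 hx).fderiv
  show fderiv ℝ (phit f) x (bas i) = _
  rw [h]
  have hb3 : bas i 3 = 0 := by
    simp only [bas]
    rw [if_neg]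
    exact fun hc => hi hc.symm
  have hbS : SS x (bas i) = x i := by
    fin_cases i
    · simp [SS_apply, bas]
    · simp [SS_apply, bas]
    · simp [SS_apply, bas]
    · exact absurd rfl hi
  have hr := (rad_pos hx).ne'
  simp only [ContinuousLinearMap.add_apply, ContinuousLinearMap.sub_apply,
    ContinuousLinearMap.smul_apply, ContinuousLinearMap.proj_apply, LA, LB, DIV,
    smul_eq_mul, hb3, hbS, Pfun]
  field_simp
  ring

lemma pd_phit_time {f : ℝ → ℝ} (hd1 : Differentiable ℝ f)
    {x : E4} (hx : x ∈ Ur) :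
    pd (phit f) 3 x = (deriv f (x 3 + rad x) - deriv f (x 3 - rad x)) * (rad x)⁻¹ := by
  have h := (hasFDerivAt_phit hd1 hx).fderiv
  show fderiv ℝ (phit f) x (bas 3) = _
  rw [h]
  have hb3 : bas 3 3 = (1:ℝ) := bas_self 3
  have hbS : SS x (bas 3) = 0 := by simp [SS_apply, bas]
  simp only [ContinuousLinearMap.add_apply, ContinuousLinearMap.sub_apply,
    ContinuousLinearMap.smul_apply, ContinuousLinearMap.proj_apply, LA, LB, DIV,
    smul_eq_mul, hb3, hbS]
  ring

def Wfun (f : ℝ → ℝ) (x : E4) : ℝ :=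
  (deriv (deriv f) (x 3 + rad x) - deriv (deriv f) (x 3 - rad x)) * ((rad x)⁻¹)^3
    - 3 * (deriv f (x 3 + rad x) + deriv f (x 3 - rad x)) * ((rad x)⁻¹)^4
    + 3 * (f (x 3 + rad x) - f (x 3 - rad x)) * ((rad x)⁻¹)^5

lemma pd2_spatial {f : ℝ → ℝ} (hd1 : Differentiable ℝ f) (hd2 : Differentiable ℝ (deriv f))
    (i : Fin 4) (hi : i ≠ 3) {x : E4} (hx : x ∈ Ur) :
    pd (pd (phit f) i) i x = Pfun f x + (x i)^2 * Wfun f x := by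
  have hP := (((hasFDerivAt_compA hd2 hx).add (hasFDerivAt_compB hd2 hx)).mul
      ((hasFDerivAt_ivr hx).mul (hasFDerivAt_ivr hx))).sub
    (((hasFDerivAt_compA hd1 hx).sub (hasFDerivAt_compB hd1 hx)).mul
      (((hasFDerivAt_ivr hx).mul (hasFDerivAt_ivr hx)).mul (hasFDerivAt_ivr hx)))
  have hGi := ((ContinuousLinearMap.proj i : E4 →L[ℝ] ℝ).hasFDerivAt (x := x)).mul hP
  have hGi' := hGi.congr_of_eventuallyEq (by
    filter_upwards [isOpen_Ur.mem_nhds hx] with y hy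
    exact pd_phit_spatial hd1 i hi hy)
  show fderiv ℝ (pd (phit f) i) x (bas i) = _
  rw [hGi'.fderiv]
  have hb3 : bas i 3 = 0 := by
    simp only [bas]
    rw [if_neg]
    exact fun hc => hi hc.symm
  have hbS : SS x (bas i) = x i := by
    fin_cases i
    · simp [SS_apply, bas]
    · simp [SS_apply, bas]
    · simp [SS_apply, bas]
    · exact absurd rfl hi
  have hr := (rad_pos hx).ne'
  simp only [ContinuousLinearMap.add_apply, ContinuousLinearMap.sub_apply,
    ContinuousLinearMap.smul_apply, ContinuousLinearMap.proj_apply, LA, LB, DIV,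
    smul_eq_mul, hb3, hbS, bas_self, Pfun, Wfun, Pi.add_apply, Pi.sub_apply, Pi.mul_apply]
  field_simp
  ring

lemma pd2_time {f : ℝ → ℝ} (hd1 : Differentiable ℝ f) (hd2 : Differentiable ℝ (deriv f))
    {x : E4} (hx : x ∈ Ur) :
    pd (pd (phit f) 3) 3 x
      = (deriv (deriv f) (x 3 + rad x) - deriv (deriv f) (x 3 - rad x)) * (rad x)⁻¹ := by
  have hT := ((hasFDerivAt_compA hd2 hx).sub (hasFDerivAt_compB hd2 hx)).mul
    (hasFDerivAt_ivr hx)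
  have hT' := hT.congr_of_eventuallyEq (by
    filter_upwards [isOpen_Ur.mem_nhds hx] with y hy
    exact pd_phit_time hd1 hy)
  show fderiv ℝ (pd (phit f) 3) x (bas 3) = _
  rw [hT'.fderiv]
  have hb3 : bas 3 3 = (1:ℝ) := bas_self 3
  have hbS : SS x (bas 3) = 0 := by simp [SS_apply, bas]
  simp only [ContinuousLinearMap.add_apply, ContinuousLinearMap.sub_apply,
    ContinuousLinearMap.smul_apply, ContinuousLinearMap.proj_apply, LA, LB, DIV,
    smul_eq_mul, hb3, hbS]
  ring

theorem wave_phit {f : ℝ → ℝ} (hd1 : Differentiable ℝ f) (hd2 : Differentiable ℝ (deriv f)) :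
    ∀ x ∈ Ur, boxm (phit f) x = 0 := by
  intro x hx
  have e0 := pd2_spatial hd1 hd2 0 (by decide) hx
  have e1 := pd2_spatial hd1 hd2 1 (by decide) hx
  have e2 := pd2_spatial hd1 hd2 2 (by decide) hx
  have e3 := pd2_time hd1 hd2 hx
  have hQ := rad_sq hx
  have hr := (rad_pos hx).ne'
  simp only [boxm, Fin.sum_univ_four, sg]
  norm_num
  rw [e0, e1, e2, e3]
  have hsum : Pfun f x + (x 0)^2 * Wfun f x + (Pfun f x + (x 1)^2 * Wfun f x)
      + (Pfun f x + (x 2)^2 * Wfun f x)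
      - (deriv (deriv f) (x 3 + rad x) - deriv (deriv f) (x 3 - rad x)) * (rad x)⁻¹
      = 3 * Pfun f x + (rad x)^2 * Wfun f x
        - (deriv (deriv f) (x 3 + rad x) - deriv (deriv f) (x 3 - rad x)) * (rad x)⁻¹ := by
    linear_combination (-(Wfun f x)) * hQ
  rw [if_neg (by decide), if_neg (by decide), if_neg (by decide)]
  have hid : 3 * Pfun f x + (rad x)^2 * Wfun f x
      - (deriv (deriv f) (x 3 + rad x) - deriv (deriv f) (x 3 - rad x)) * (rad x)⁻¹ = 0 := by
    unfold Pfun Wfun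
    field_simp
    ring
  linarith [hsum, hid]

-- Part 3 tools
open Topology in
lemma iteratedDeriv_eq_of_eqOn_Ioi {g h : ℝ → ℝ}
    (hg : ContDiff ℝ (⊤ : ℕ∞) g) (hh : ContDiff ℝ (⊤ : ℕ∞) h)
    (he : ∀ s : ℝ, 0 < s → g s = h s) (n : ℕ) :
    iteratedDeriv n g 0 = iteratedDeriv n h 0 := by
  have hEq : Set.EqOn (iteratedDeriv n g) (iteratedDeriv n h) (Set.Ioi (0:ℝ)) :=
    Set.EqOn.iteratedDeriv_of_isOpen (fun s hs => he s hs) isOpen_Ioi n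
  have cg : Continuous (iteratedDeriv n g) :=
    hg.continuous_iteratedDeriv n (by exact_mod_cast le_top)
  have ch : Continuous (iteratedDeriv n h) :=
    hh.continuous_iteratedDeriv n (by exact_mod_cast le_top)
  have t1 : Filter.Tendsto (iteratedDeriv n g) (𝓝[>] (0:ℝ)) (𝓝 (iteratedDeriv n g 0)) :=
    (cg.tendsto 0).mono_left nhdsWithin_le_nhds
  have t2 : Filter.Tendsto (iteratedDeriv n g) (𝓝[>] (0:ℝ)) (𝓝 (iteratedDeriv n h 0)) := by
    refine Filter.Tendsto.congr' ?_ ((ch.tendsto 0).mono_left nhdsWithin_le_nhds)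
    filter_upwards [self_mem_nhdsWithin] with s hs
    exact (hEq hs).symm
  exact tendsto_nhds_unique t1 t2

lemma iteratedDeriv_lin_comp {k : ℝ → ℝ} (hk : ContDiff ℝ (⊤ : ℕ∞) k) (c : ℝ) (n : ℕ) :
    iteratedDeriv n (fun s : ℝ => k (c * s)) 0 = c ^ n * iteratedDeriv n k 0 := by
  have := iteratedDeriv_comp_const_mul (f := k) (n := n) (hk.of_le (by exact_mod_cast le_top)) c
  rw [congrFun this 0]
  norm_num

lemma Hb_sub_Ur : Hb ⊆ Ur := fun x hx => by
  have : mk4 x x = 1 := hx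
  simp only [Ur, Set.mem_setOf_eq, this]; norm_num

lemma Hb_Q {y : E4} (hy : y ∈ Hb) : (y 0)^2 + (y 1)^2 + (y 2)^2 = 1 + (y 3)^2 := by
  have : mk4 y y = 1 := hy
  rw [mk4_eq] at this; linarith

lemma Hb_rad {y : E4} (hy : y ∈ Hb) : rad y = Real.sqrt (1 + (y 3)^2) := by
  rw [rad, Hb_Q hy]

lemma Hb_key {y : E4} (hy : y ∈ Hb) : (rad y - y 3) * (rad y + y 3) = 1 := by
  have h := rad_sq (Hb_sub_Ur hy)
  rw [Hb_Q hy] at h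
  nlinarith [h]

lemma smul_coord (c : ℝ) (x : E4) (i : Fin 4) : (c • x) i = c * x i := rfl

lemma rad_smul {c : ℝ} (hc : 0 ≤ c) (x : E4) : rad (c • x) = c * rad x := by
  have : rad (c • x) = Real.sqrt (c^2 * ((x 0)^2 + (x 1)^2 + (x 2)^2)) := by
    rw [rad]; congr 1; simp [smul_coord]; ring
  rw [this, Real.sqrt_mul (sq_nonneg c), Real.sqrt_sq hc, rad]

lemma mk4_smul (c : ℝ) (x : E4) : mk4 (c • x) (c • x) = c^2 * mk4 x x := by
  rw [mk4_eq, mk4_eq]; simp [smul_coord]; ring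

lemma iteratedDeriv_cmul_lin {k : ℝ → ℝ} (hk : ContDiff ℝ (⊤ : ℕ∞) k) (c a : ℝ) (n : ℕ) :
    iteratedDeriv n (fun s : ℝ => c * k (a * s)) 0 = c * (a ^ n * iteratedDeriv n k 0) := by
  have h1 : ContDiff ℝ (n : ℕ∞) fun s : ℝ => k (a * s) :=
    (hk.of_le (by exact_mod_cast le_top)).comp (contDiff_const.mul contDiff_id)
  rw [← iteratedDerivWithin_univ,
    iteratedDerivWithin_const_mul (Set.mem_univ (0:ℝ)) uniqueDiffOn_univ c h1.contDiffAt.contDiffWithinAt,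
    iteratedDerivWithin_univ, iteratedDeriv_lin_comp hk a n]

lemma iteratedDeriv_G {kp km : ℝ → ℝ} (hkp : ContDiff ℝ (⊤ : ℕ∞) kp)
    (hkm : ContDiff ℝ (⊤ : ℕ∞) km) (c a b : ℝ) (n : ℕ) :
    iteratedDeriv n (fun s : ℝ => c * kp (a * s) - c * km (b * s)) 0
      = c * (a ^ n * iteratedDeriv n kp 0) - c * (b ^ n * iteratedDeriv n km 0) := by
  have h1 : ContDiff ℝ (n : ℕ∞) fun s : ℝ => c * kp (a * s) :=
    contDiff_const.mul ((hkp.of_le (by exact_mod_cast le_top)).comp (contDiff_const.mul contDiff_id))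
  have h2 : ContDiff ℝ (n : ℕ∞) fun s : ℝ => c * km (b * s) :=
    contDiff_const.mul ((hkm.of_le (by exact_mod_cast le_top)).comp (contDiff_const.mul contDiff_id))
  have e : (fun s : ℝ => c * kp (a * s) - c * km (b * s))
      = (fun s : ℝ => c * kp (a * s)) - (fun s : ℝ => c * km (b * s)) := rfl
  rw [e, ← iteratedDerivWithin_univ,
    iteratedDerivWithin_sub (Set.mem_univ (0:ℝ)) uniqueDiffOn_univ h1.contDiffAt.contDiffWithinAt h2.contDiffAt.contDiffWithinAt,
    iteratedDerivWithin_univ, iteratedDerivWithin_univ,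
    iteratedDeriv_cmul_lin hkp c a n, iteratedDeriv_cmul_lin hkm c b n]

lemma remnant_eq (f kp km : ℝ → ℝ)
    (hkp : ContDiff ℝ (⊤ : ℕ∞) kp) (hkm : ContDiff ℝ (⊤ : ℕ∞) km)
    (hp : ∀ s : ℝ, 0 < s → kp s = f (1 / s))
    (hm : ∀ s : ℝ, 0 < s → km s = f (-(1 / s)))
    (F : ℝ → E4 → ℝ) (hF : CompProps f F) (n : ℕ) (y : E4) (hy : y ∈ Hb) :
    iteratedDeriv n (fun s => F s y) 0
      = (Real.sqrt (1 + (y 3)^2))⁻¹ *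
          (iteratedDeriv n kp 0 * (Real.sqrt (1 + (y 3)^2) - y 3)^n
            - iteratedDeriv n km 0 * (Real.sqrt (1 + (y 3)^2) + y 3)^n) := by
  have hyU : y ∈ Ur := Hb_sub_Ur hy
  have hρ : 0 < rad y := rad_pos hyU
  have hsub : 0 < rad y - y 3 := rad_sub_pos hyU
  have hadd : 0 < y 3 + rad y := rad_add_pos hyU
  have hkey := Hb_key hy
  set G : ℝ → ℝ := fun s => (rad y)⁻¹ * kp ((rad y - y 3) * s)
      - (rad y)⁻¹ * km ((rad y + y 3) * s) with hG
  -- slice smoothness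
  have Sopen : IsOpen {p : ℝ × E4 | p.2 ∈ Ur} := isOpen_Ur.preimage continuous_snd
  have h1 : ContDiff ℝ (⊤ : ℕ∞) (fun s => F s y) := by
    refine contDiff_iff_contDiffAt.mpr fun s => ?_
    have h := (hF.1 (s, y) hyU).contDiffAt (Sopen.mem_nhds hyU)
    have hc : ContDiffAt ℝ (⊤ : ℕ∞) (fun t : ℝ => (t, y)) s :=
      (contDiff_id.prodMk contDiff_const).contDiffAt
    exact (h.comp s hc).of_le (by exact le_rfl)
  have h2 : ContDiff ℝ (⊤ : ℕ∞) G := by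
    have a1 : ContDiff ℝ (⊤ : ℕ∞) fun s : ℝ => kp ((rad y - y 3) * s) :=
      (hkp.of_le (by simp)).comp (contDiff_const.mul contDiff_id)
    have a2 : ContDiff ℝ (⊤ : ℕ∞) fun s : ℝ => km ((rad y + y 3) * s) :=
      (hkm.of_le (by simp)).comp (contDiff_const.mul contDiff_id)
    exact (contDiff_const.mul a1).sub (contDiff_const.mul a2)
  have h3 : ∀ s : ℝ, 0 < s → F s y = G s := by
    intro s hs
    have e := hF.2.2 s hs y hy
    have hr' : rad ((1/s) • y) = (1/s) * rad y := rad_smul (by positivity) y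
    have ht' : tco ((1/s) • y) = (1/s) * y 3 := rfl
    have ekp : kp ((rad y - y 3) * s) = f ((y 3 + rad y) / s) := by
      rw [hp _ (by positivity)]
      congr 1
      rw [div_eq_div_iff (by positivity) hs.ne']
      linear_combination (-s) * hkey
    have ekm : km ((rad y + y 3) * s) = f ((y 3 - rad y) / s) := by
      rw [hm _ (mul_pos (show (0:ℝ) < rad y + y 3 by linarith) hs)]
      congr 1
      have harg : (1 : ℝ) / ((rad y + y 3) * s) = (rad y - y 3) / s := by
        rw [div_eq_div_iff (mul_pos (show (0:ℝ) < rad y + y 3 by linarith) hs).ne' hs.ne']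
        linear_combination (-s) * hkey
      rw [harg]
      ring
    rw [e]
    simp only [phit, hr', ht', hG]
    rw [ekp, ekm,
      show (1/s) * y 3 + (1/s) * rad y = (y 3 + rad y)/s from by ring,
      show (1/s) * y 3 - (1/s) * rad y = (y 3 - rad y)/s from by ring]
    field_simp
  have key := iteratedDeriv_eq_of_eqOn_Ioi h1 h2 h3 n
  rw [key, hG, iteratedDeriv_G hkp hkm ((rad y)⁻¹) (rad y - y 3) (rad y + y 3) n,
    ← Hb_rad hy]
  ring

def Fc (kp km : ℝ → ℝ) (s : ℝ) (x : E4) : ℝ :=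
  (Real.sqrt (mk4 x x) / rad x) *
    (kp (s * Real.sqrt (mk4 x x) / (x 3 + rad x)) -
      km (s * Real.sqrt (mk4 x x) / (rad x - x 3)))

lemma Fc_smooth {kp km : ℝ → ℝ} (hkp : ContDiff ℝ (⊤ : ℕ∞) kp) (hkm : ContDiff ℝ (⊤ : ℕ∞) km) :
    ContDiffOn ℝ (⊤ : ℕ∞) (fun p : ℝ × E4 => Fc kp km p.1 p.2) {p : ℝ × E4 | p.2 ∈ Ur} := by
  have Sopen : IsOpen {p : ℝ × E4 | p.2 ∈ Ur} := isOpen_Ur.preimage continuous_snd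
  intro p hp
  have hpU : p.2 ∈ Ur := hp
  apply ContDiffAt.contDiffWithinAt
  have hcoord : ∀ i : Fin 4, ContDiffAt ℝ (⊤ : ℕ∞) (fun q : ℝ × E4 => q.2 i) p :=
    fun i => (((ContinuousLinearMap.proj i : E4 →L[ℝ] ℝ).comp
      (ContinuousLinearMap.snd ℝ ℝ E4)).contDiff).contDiffAt
  have hmk : ContDiffAt ℝ (⊤ : ℕ∞) (fun q : ℝ × E4 => mk4 q.2 q.2) p := by
    have : (fun q : ℝ × E4 => mk4 q.2 q.2)
        = fun q : ℝ × E4 => (q.2 0)^2 + (q.2 1)^2 + (q.2 2)^2 - (q.2 3)^2 := by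
      funext q; rw [mk4_eq]
    rw [this]
    exact ((((hcoord 0).pow 2).add ((hcoord 1).pow 2)).add ((hcoord 2).pow 2)).sub
      ((hcoord 3).pow 2)
  have hR : ContDiffAt ℝ (⊤ : ℕ∞) (fun q : ℝ × E4 => Real.sqrt (mk4 q.2 q.2)) p :=
    hmk.sqrt (ne_of_gt hpU)
  have hQc : ContDiffAt ℝ (⊤ : ℕ∞) (fun q : ℝ × E4 => (q.2 0)^2 + (q.2 1)^2 + (q.2 2)^2) p :=
    (((hcoord 0).pow 2).add ((hcoord 1).pow 2)).add ((hcoord 2).pow 2)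
  have hrad : ContDiffAt ℝ (⊤ : ℕ∞) (fun q : ℝ × E4 => rad q.2) p := hQc.sqrt (ne_of_gt (Q_pos hpU))
  have hs : ContDiffAt ℝ (⊤ : ℕ∞) (fun q : ℝ × E4 => q.1) p := contDiffAt_fst
  have harg1 : ContDiffAt ℝ (⊤ : ℕ∞)
      (fun q : ℝ × E4 => q.1 * Real.sqrt (mk4 q.2 q.2) / (q.2 3 + rad q.2)) p :=
    (hs.mul hR).div ((hcoord 3).add hrad) (ne_of_gt (rad_add_pos hpU))
  have harg2 : ContDiffAt ℝ (⊤ : ℕ∞)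
      (fun q : ℝ × E4 => q.1 * Real.sqrt (mk4 q.2 q.2) / (rad q.2 - q.2 3)) p :=
    (hs.mul hR).div (hrad.sub (hcoord 3)) (ne_of_gt (rad_sub_pos hpU))
  exact ((hR.div hrad (ne_of_gt (rad_pos hpU))).mul
    (((hkp.contDiffAt).comp p harg1).sub ((hkm.contDiffAt).comp p harg2)))

lemma Fc_homog {kp km : ℝ → ℝ} :
    ∀ (s c : ℝ), 0 < c → ∀ x ∈ Ur, Fc kp km s (c • x) = Fc kp km s x := by
  intro s c hc x hx
  have h1 : Real.sqrt (mk4 (c • x) (c • x)) = c * Real.sqrt (mk4 x x) := by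
    rw [mk4_smul, Real.sqrt_mul (sq_nonneg c), Real.sqrt_sq hc.le]
  have h2 : rad (c • x) = c * rad x := rad_smul hc.le x
  have h3 : (c • x) 3 = c * x 3 := rfl
  have hr := (rad_pos hx).ne'
  have ha := (rad_add_pos hx).ne'
  have hb := (rad_sub_pos hx).ne'
  unfold Fc
  rw [h1, h2, h3]
  rw [show c * x 3 + c * rad x = c * (x 3 + rad x) from by ring,
    show c * rad x - c * x 3 = c * (rad x - x 3) from by ring,
    show s * (c * Real.sqrt (mk4 x x)) = c * (s * Real.sqrt (mk4 x x)) from by ring,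
    mul_div_mul_left _ _ hc.ne', mul_div_mul_left _ _ hc.ne',
    mul_div_mul_left _ _ hc.ne']

lemma Fc_slice {f kp km : ℝ → ℝ}
    (hp : ∀ s : ℝ, 0 < s → kp s = f (1 / s))
    (hm : ∀ s : ℝ, 0 < s → km s = f (-(1 / s))) :
    ∀ s : ℝ, 0 < s → ∀ y ∈ Hb, Fc kp km s y = (1 / s) * phit f ((1 / s) • y) := by
  intro s hs y hy
  have hyU : y ∈ Ur := Hb_sub_Ur hy
  have hρ : 0 < rad y := rad_pos hyU
  have hadd : 0 < y 3 + rad y := rad_add_pos hyU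
  have hsub : 0 < rad y - y 3 := rad_sub_pos hyU
  have hkey := Hb_key hy
  have hR1 : Real.sqrt (mk4 y y) = 1 := by
    have : mk4 y y = 1 := hy
    rw [this, Real.sqrt_one]
  have hr' : rad ((1/s) • y) = (1/s) * rad y := rad_smul (by positivity) y
  have ht' : tco ((1/s) • y) = (1/s) * y 3 := rfl
  have ekp : kp (s * 1 / (y 3 + rad y)) = f ((y 3 + rad y) / s) := by
    rw [hp _ (by positivity)]
    congr 1
    rw [div_div_eq_mul_div, one_mul, mul_one]
  have ekm : km (s * 1 / (rad y - y 3)) = f ((y 3 - rad y) / s) := by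
    rw [hm _ (by positivity)]
    congr 1
    rw [div_div_eq_mul_div, one_mul, mul_one]
    ring
  unfold Fc
  rw [hR1]
  simp only [phit, hr', ht']
  rw [ekp, ekm,
    show (1/s) * y 3 + (1/s) * rad y = (y 3 + rad y)/s from by ring,
    show (1/s) * y 3 - (1/s) * rad y = (y 3 - rad y)/s from by ring]
  field_simp

/-
STATEMENT 6: with k_±(x) = f(±1/x) (x>0) smoothly extendible to 0, the field
φ̃ = (f(t+r) − f(t−r))/r solves the wave equation on r > |t|, is asymptotically regular
of order 1, and its remnants are, in the coordinate ζ = sinh χ (tanh χ = t/r; on H this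
is the coordinate ζ = y₃ = t):
 φⁿ(ζ) = (1+ζ²)^{-1/2} [k₊⁽ⁿ⁾(0)((1+ζ²)^{1/2} − ζ)ⁿ − k₋⁽ⁿ⁾(0)((1+ζ²)^{1/2} + ζ)ⁿ].
-/
theorem stmt6 (f kp km : ℝ → ℝ)
    (hf : ContDiff ℝ (⊤ : ℕ∞) f) (hkp : ContDiff ℝ (⊤ : ℕ∞) kp) (hkm : ContDiff ℝ (⊤ : ℕ∞) km)
    (hp : ∀ s : ℝ, 0 < s → kp s = f (1 / s))
    (hm : ∀ s : ℝ, 0 < s → km s = f (-(1 / s))) :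
    (∀ x ∈ Ur, boxm (phit f) x = 0) ∧
    (∃ F : ℝ → E4 → ℝ, CompProps f F) ∧
    (∀ F : ℝ → E4 → ℝ, CompProps f F → ∀ n : ℕ, ∀ y ∈ Hb,
      iteratedDeriv n (fun s => F s y) 0
        = (Real.sqrt (1 + (y 3)^2))⁻¹ *
            (iteratedDeriv n kp 0 * (Real.sqrt (1 + (y 3)^2) - y 3)^n
              - iteratedDeriv n km 0 * (Real.sqrt (1 + (y 3)^2) + y 3)^n)) := by
  have hfi : ContDiff ℝ (⊤ : ℕ∞) f := hf.of_le (by simp)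
  have hd1 : Differentiable ℝ f := (contDiff_infty_iff_deriv.mp hfi).1
  have hf1 : ContDiff ℝ (⊤ : ℕ∞) (deriv f) := (contDiff_infty_iff_deriv.mp hfi).2
  have hd2 : Differentiable ℝ (deriv f) := (contDiff_infty_iff_deriv.mp hf1).1
  refine ⟨wave_phit hd1 hd2, ⟨Fc kp km, Fc_smooth hkp hkm, Fc_homog, Fc_slice hp hm⟩, ?_⟩
  intro F hF n y hy
  exact remnant_eq f kp km hkp hkm hp hm F hF n y hy
end
end
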